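/- Let Y ⊆ F_rⁿ and Y' ⊆ F_r^m be nonempty algebraic sets over F_r. Then Y and Y' are isomorphic as algebraic sets if and only if there is an F_r-isomorphism between their coordinate algebras Γ(Y) and Γ(Y'). -/

import Mathlib

open LieAlgebra

universe u v w

/-- A Lie ring is metabelian if it satisfies the identity `⁅⁅x₁,x₂⁆,⁅x₃,x₄⁆⁆ = 0`. -/
def IsMetabelian (L : Type v) [LieRing L] : Prop :=
  ∀ a b c d : L, ⁅⁅a, b⁆, ⁅c, d⁆⁆ = 0

variable (k : Type u) [Field k]

namespace LieMeta

/-- The canonical projection onto the quotient by a Lie ideal, as a Lie algebra morphism. -/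
def mkHom {L : Type v} [LieRing L] [LieAlgebra k L] (I : LieIdeal k L) : L →ₗ⁅k⁆ L ⧸ I :=
  { I.toSubmodule.mkQ with
    map_lie' := fun {_ _} => rfl }

variable {k}

/-- Lift of a Lie algebra morphism through a quotient by an ideal inside its kernel. -/
def qlift {L : Type v} {B : Type w} [LieRing L] [LieAlgebra k L] [LieRing B] [LieAlgebra k B]
    (I : LieIdeal k L) (f : L →ₗ⁅k⁆ B) (h : I ≤ f.ker) : (L ⧸ I) →ₗ⁅k⁆ B :=
  { Submodule.liftQ I.toSubmodule (f : L →ₗ[k] B)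
      (fun x hx => by simpa using (LieHom.mem_ker).mp (h hx)) with
    map_lie' := by
      rintro ⟨x⟩ ⟨y⟩
      exact f.map_lie x y }

@[simp]
theorem qlift_mk {L : Type v} {B : Type w} [LieRing L] [LieAlgebra k L] [LieRing B]
    [LieAlgebra k B] (I : LieIdeal k L) (f : L →ₗ⁅k⁆ B) (h : I ≤ f.ker) (x : L) :
    qlift I f h (mkHom k I x) = f x := rfl

/-- In a metabelian Lie algebra the second derived ideal vanishes. -/
theorem derivedSeries_two_eq_bot_of_isMetabelian {B : Type w} [LieRing B] [LieAlgebra k B]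
    (hB : IsMetabelian B) : derivedSeries k B 2 = ⊥ := by
  have hD1 : ∀ x ∈ derivedSeries k B 1, ∀ m ∈ derivedSeries k B 1, ⁅x, m⁆ = (0 : B) := by
    have hspan : (↑(derivedSeries k B 1) : Submodule k B) =
        Submodule.span k {m | ∃ x ∈ (⊤ : LieIdeal k B), ∃ n ∈ (⊤ : LieIdeal k B), ⁅x, n⁆ = m} := by
      rw [show derivedSeries k B 1 = ⁅(⊤ : LieIdeal k B), (⊤ : LieIdeal k B)⁆ by
        rw [derivedSeries_def, derivedSeriesOfIdeal_succ, derivedSeriesOfIdeal_zero]]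
      exact LieSubmodule.lieIdeal_oper_eq_linear_span' ..
    intro x hx
    have hx' : x ∈ Submodule.span k
        {m | ∃ x ∈ (⊤ : LieIdeal k B), ∃ n ∈ (⊤ : LieIdeal k B), ⁅x, n⁆ = m} := by
      rw [← hspan]; exact hx
    clear hx
    induction hx' using Submodule.span_induction with
    | mem z hz =>
      obtain ⟨a, -, b, -, rfl⟩ := hz
      intro m hm
      have hm' : m ∈ Submodule.span k
          {m | ∃ x ∈ (⊤ : LieIdeal k B), ∃ n ∈ (⊤ : LieIdeal k B), ⁅x, n⁆ = m} := by
        rw [← hspan]; exact hm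
      clear hm
      induction hm' using Submodule.span_induction with
      | mem w hw => obtain ⟨c, -, d, -, rfl⟩ := hw; exact hB a b c d
      | zero => exact lie_zero _
      | add u v _ _ hu hv => rw [lie_add, hu, hv, add_zero]
      | smul t u _ hu => rw [lie_smul, hu, smul_zero]
    | zero => intro m _; exact zero_lie m
    | add u v _ _ hu hv =>
      intro m hm; rw [add_lie, hu m hm, hv m hm, add_zero]
    | smul t u _ hu => intro m hm; rw [smul_lie, hu m hm, smul_zero]
  rw [eq_bot_iff, show derivedSeries k B 2 = ⁅derivedSeries k B 1, derivedSeries k B 1⁆ by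
    rw [derivedSeries_def, derivedSeriesOfIdeal_succ]]
  rw [LieSubmodule.lie_le_iff]
  intro x hx m hm
  rw [LieSubmodule.mem_bot]
  exact hD1 x hx m hm

end LieMeta

/-- The free metabelian Lie algebra over `k` on a set `X` of generators: the quotient of the
free Lie algebra by its second derived ideal. -/
abbrev FreeMetabelian (X : Type v) : Type _ :=
  FreeLieAlgebra k X ⧸ derivedSeries k (FreeLieAlgebra k X) 2

namespace FreeMetabelian

/-- The canonical (free) generators of the free metabelian Lie algebra. -/
noncomputable def of (X : Type v) (x : X) : FreeMetabelian k X :=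
  LieMeta.mkHom k (derivedSeries k (FreeLieAlgebra k X) 2) (FreeLieAlgebra.of k x)

theorem isMetabelian (X : Type v) : IsMetabelian (FreeMetabelian k X) := by
  rintro ⟨a⟩ ⟨b⟩ ⟨c⟩ ⟨d⟩
  show LieMeta.mkHom k (derivedSeries k (FreeLieAlgebra k X) 2) ⁅⁅a, b⁆, ⁅c, d⁆⁆ = 0
  have h1 : ∀ x y : FreeLieAlgebra k X, ⁅x, y⁆ ∈ derivedSeries k (FreeLieAlgebra k X) 1 := by
    intro x y
    rw [show derivedSeries k (FreeLieAlgebra k X) 1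
        = ⁅(⊤ : LieIdeal k (FreeLieAlgebra k X)), (⊤ : LieIdeal k (FreeLieAlgebra k X))⁆ by
      rw [derivedSeries_def, derivedSeriesOfIdeal_succ, derivedSeriesOfIdeal_zero]]
    exact LieSubmodule.lie_mem_lie trivial trivial
  have h2 : ⁅⁅a, b⁆, ⁅c, d⁆⁆ ∈ derivedSeries k (FreeLieAlgebra k X) 2 := by
    rw [show derivedSeries k (FreeLieAlgebra k X) 2
        = ⁅derivedSeries k (FreeLieAlgebra k X) 1, derivedSeries k (FreeLieAlgebra k X) 1⁆ by
      rw [derivedSeries_def, derivedSeriesOfIdeal_succ]]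
    exact LieSubmodule.lie_mem_lie (h1 a b) (h1 c d)
  exact (LieSubmodule.Quotient.mk_eq_zero _).mpr h2

variable {k}

/-- The universal property: a map on generators into a metabelian Lie algebra extends
uniquely to the free metabelian Lie algebra. -/
noncomputable def lift {X : Type v} {B : Type w} [LieRing B] [LieAlgebra k B]
    (f : X → B) (hB : IsMetabelian B) : FreeMetabelian k X →ₗ⁅k⁆ B :=
  LieMeta.qlift _ (FreeLieAlgebra.lift k f) (by
    intro x hx
    rw [LieHom.mem_ker]
    have h1 : FreeLieAlgebra.lift k f x ∈
        LieIdeal.map (FreeLieAlgebra.lift k f) (derivedSeries k (FreeLieAlgebra k X) 2) :=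
      LieIdeal.mem_map hx
    have h2 := LieIdeal.derivedSeries_map_le (f := FreeLieAlgebra.lift k f) 2
    rw [LieMeta.derivedSeries_two_eq_bot_of_isMetabelian hB] at h2
    simpa using h2 h1)

@[simp]
theorem lift_of {X : Type v} {B : Type w} [LieRing B] [LieAlgebra k B]
    (f : X → B) (hB : IsMetabelian B) (x : X) : lift f hB (of k X x) = f x := by
  show FreeLieAlgebra.lift k f (FreeLieAlgebra.of k x) = f x
  simp

end FreeMetabelian

namespace LieAG

variable (r n : ℕ)

/-- The inclusion of `F_r` into `F_{r+n}` sending `aᵢ` to `aᵢ`. -/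
noncomputable def incl : FreeMetabelian k (Fin r) →ₗ⁅k⁆ FreeMetabelian k (Fin r ⊕ Fin n) :=
  FreeMetabelian.lift (fun i => FreeMetabelian.of k _ (Sum.inl i))
    (FreeMetabelian.isMetabelian k _)

/-- Evaluation at the point `p`: the unique Lie algebra morphism `F_{r+n} → F_r` which is the
identity on the generators of `F_r` and sends the unknown `xⱼ` to `p j`. -/
noncomputable def ev (p : Fin n → FreeMetabelian k (Fin r)) :
    FreeMetabelian k (Fin r ⊕ Fin n) →ₗ⁅k⁆ FreeMetabelian k (Fin r) :=
  FreeMetabelian.lift (Sum.elim (FreeMetabelian.of k _) p) (FreeMetabelian.isMetabelian k _)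

/-- The algebraic set defined by the system of equations `S ⊆ F_{r+n}`. -/
def vSet (S : Set (FreeMetabelian k (Fin r ⊕ Fin n))) :
    Set (Fin n → FreeMetabelian k (Fin r)) :=
  {p | ∀ f ∈ S, ev k r n p f = 0}

/-- A subset of affine `n`-space over `F_r` is algebraic if it is the solution set of some
system of equations. -/
def IsAlgSet (Y : Set (Fin n → FreeMetabelian k (Fin r))) : Prop :=
  ∃ S, Y = vSet k r n S

/-- The radical of a subset `Y` of affine `n`-space, as a Lie ideal of `F_{r+n}`:
all equations vanishing on every point of `Y`. -/
noncomputable def radIdeal (Y : Set (Fin n → FreeMetabelian k (Fin r))) :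
    LieIdeal k (FreeMetabelian k (Fin r ⊕ Fin n)) :=
  ⨅ (p : Fin n → FreeMetabelian k (Fin r)) (_ : p ∈ Y), (ev k r n p).ker

/-- The coordinate algebra `Γ(Y) = F_{r+n} / Rad(Y)`. -/
abbrev Coord (Y : Set (Fin n → FreeMetabelian k (Fin r))) : Type _ :=
  FreeMetabelian k (Fin r ⊕ Fin n) ⧸ radIdeal k r n Y

/-- The canonical morphism `κ_Y : F_r → Γ(Y)`. -/
noncomputable def kappa (Y : Set (Fin n → FreeMetabelian k (Fin r))) :
    FreeMetabelian k (Fin r) →ₗ⁅k⁆ Coord k r n Y :=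
  (LieMeta.mkHom k (radIdeal k r n Y)).comp (incl k r n)

theorem radIdeal_le_ker {Y : Set (Fin n → FreeMetabelian k (Fin r))}
    {p : Fin n → FreeMetabelian k (Fin r)} (hp : p ∈ Y) :
    radIdeal k r n Y ≤ (ev k r n p).ker := by
  exact iInf₂_le p hp

/-- The `F_r`-morphism `Γ(Y) → F_r` induced by evaluation at a point of `Y`. -/
noncomputable def pointHom {Y : Set (Fin n → FreeMetabelian k (Fin r))}
    {p : Fin n → FreeMetabelian k (Fin r)} (hp : p ∈ Y) :
    Coord k r n Y →ₗ⁅k⁆ FreeMetabelian k (Fin r) :=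
  LieMeta.qlift _ (ev k r n p) (radIdeal_le_ker k r n hp)

/-- The point of affine space associated with a morphism `Γ(Y) → F_r`: the images of
the unknowns. -/
noncomputable def pointOf {Y : Set (Fin n → FreeMetabelian k (Fin r))}
    (φ : Coord k r n Y →ₗ⁅k⁆ FreeMetabelian k (Fin r)) :
    Fin n → FreeMetabelian k (Fin r) :=
  fun j => φ (LieMeta.mkHom k (radIdeal k r n Y) (FreeMetabelian.of k _ (Sum.inr j)))

/-- The Zariski topology on affine `n`-space over `F_r`: the algebraic sets form a
subbasis of closed sets. -/
def zariski : TopologicalSpace (Fin n → FreeMetabelian k (Fin r)) :=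
  TopologicalSpace.generateFrom {U | ∃ S, U = (vSet k r n S)ᶜ}

/-- A closed subset (in the Zariski topology) is irreducible if it is nonempty and is not the
union of two proper closed subsets. -/
def IsIrredClosed (Y : Set (Fin n → FreeMetabelian k (Fin r))) : Prop :=
  Y.Nonempty ∧ ∀ Y₁ Y₂ : Set (Fin n → FreeMetabelian k (Fin r)),
    @IsClosed _ (zariski k r n) Y₁ → @IsClosed _ (zariski k r n) Y₂ →
      Y₁ ⊂ Y → Y₂ ⊂ Y → Y ≠ Y₁ ∪ Y₂

/-- `Y` and `Z` are isomorphic algebraic sets: there are mutually inverse morphisms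
(given coordinatewise by Lie polynomials) between them. -/
def AlgIso {n m : ℕ} (Y : Set (Fin n → FreeMetabelian k (Fin r)))
    (Z : Set (Fin m → FreeMetabelian k (Fin r))) : Prop :=
  ∃ (fs : Fin m → FreeMetabelian k (Fin r ⊕ Fin n))
    (gs : Fin n → FreeMetabelian k (Fin r ⊕ Fin m)),
    (∀ p ∈ Y, (fun j => ev k r n p (fs j)) ∈ Z) ∧
    (∀ q ∈ Z, (fun i => ev k r m q (gs i)) ∈ Y) ∧
    (∀ p ∈ Y, (fun i => ev k r m (fun j => ev k r n p (fs j)) (gs i)) = p) ∧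
    (∀ q ∈ Z, (fun j => ev k r n (fun i => ev k r m q (gs i)) (fs j)) = q)

end LieAG

/-- The Fitting radical of a Lie algebra: the set of elements whose generated Lie ideal is
nilpotent. -/
def fittingSet (B : Type w) [LieRing B] [LieAlgebra k B] : Set B :=
  {x | ∃ i, LieModule.lowerCentralSeries k (LieSubmodule.lieSpan k B ({x} : Set B))
    (LieSubmodule.lieSpan k B ({x} : Set B)) i = ⊥}

/-! A polynomial map `ψ = (f₁, …, f_m) : Y → Z` induces the `F_r`-morphism `Γ(Z) → Γ(Y)` given
by the substitution `xⱼ ↦ fⱼ`. Since `Rad(Y)` consists exactly of the equations vanishing on `Y`,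
two polynomial maps agree on `Y` iff they induce the same morphism, so mutually inverse maps induce
mutually inverse morphisms. Conversely, an `F_r`-morphism `φ : Γ(Z) → Γ(Y)` is induced by any
choice of preimages `fⱼ ∈ F_{r+n}` of the `φ(xⱼ)`, and the resulting polynomial map sends `Y` into
`Z` because an algebraic set satisfies `Z = V(Rad(Z))`. -/

section CoordinateAlgebras

variable {k}

namespace LieMeta

variable {L : Type v} [LieRing L] [LieAlgebra k L]

theorem mkHom_surjective (I : LieIdeal k L) : Function.Surjective (mkHom k I) :=
  Submodule.Quotient.mk_surjective _

theorem mkHom_eq_zero_iff (I : LieIdeal k L) {x : L} : mkHom k I x = 0 ↔ x ∈ I :=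
  Submodule.Quotient.mk_eq_zero _

theorem mkHom_eq_mkHom_iff (I : LieIdeal k L) {x y : L} : mkHom k I x = mkHom k I y ↔ x - y ∈ I :=
  Submodule.Quotient.eq _

end LieMeta

namespace FreeMetabelian

theorem hom_ext {X : Type v} {B : Type w} [LieRing B] [LieAlgebra k B]
    {F₁ F₂ : FreeMetabelian k X →ₗ⁅k⁆ B} (h : ∀ x, F₁ (of k X x) = F₂ (of k X x)) : F₁ = F₂ := by
  have h₂ : F₁.comp (LieMeta.mkHom k (derivedSeries k (FreeLieAlgebra k X) 2)) =
      F₂.comp (LieMeta.mkHom k (derivedSeries k (FreeLieAlgebra k X) 2)) :=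
    FreeLieAlgebra.hom_ext h
  ext z
  obtain ⟨x, rfl⟩ := LieMeta.mkHom_surjective _ z
  exact LieHom.congr_fun h₂ x

end FreeMetabelian

namespace LieAG

variable {r n m l : ℕ}

@[simp]
theorem ev_of_inl (p : Fin n → FreeMetabelian k (Fin r)) (i : Fin r) :
    ev k r n p (FreeMetabelian.of k _ (Sum.inl i)) = FreeMetabelian.of k _ i := by
  simp [ev]

@[simp]
theorem ev_of_inr (p : Fin n → FreeMetabelian k (Fin r)) (j : Fin n) :
    ev k r n p (FreeMetabelian.of k _ (Sum.inr j)) = p j := by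
  simp [ev]

@[simp]
theorem incl_of (i : Fin r) :
    incl k r n (FreeMetabelian.of k _ i) = FreeMetabelian.of k _ (Sum.inl i) := by
  simp [incl]

theorem mem_radIdeal {Y : Set (Fin n → FreeMetabelian k (Fin r))}
    {f : FreeMetabelian k (Fin r ⊕ Fin n)} :
    f ∈ radIdeal k r n Y ↔ ∀ p ∈ Y, ev k r n p f = 0 := by
  simp [radIdeal, LieSubmodule.mem_iInf, LieHom.mem_ker]

theorem vSet_radIdeal {Y : Set (Fin n → FreeMetabelian k (Fin r))} (hY : IsAlgSet k r n Y) :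
    vSet k r n (radIdeal k r n Y) = Y := by
  obtain ⟨S, rfl⟩ := hY
  refine Set.Subset.antisymm (fun p hp f hf => hp f (mem_radIdeal.2 fun q hq => hq f hf)) ?_
  exact fun p hp f hf => mem_radIdeal.1 hf p hp

noncomputable def subst (fs : Fin m → FreeMetabelian k (Fin r ⊕ Fin n)) :
    FreeMetabelian k (Fin r ⊕ Fin m) →ₗ⁅k⁆ FreeMetabelian k (Fin r ⊕ Fin n) :=
  FreeMetabelian.lift (Sum.elim (fun i => FreeMetabelian.of k _ (Sum.inl i)) fs)
    (FreeMetabelian.isMetabelian k _)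

noncomputable def polyMap (fs : Fin m → FreeMetabelian k (Fin r ⊕ Fin n))
    (p : Fin n → FreeMetabelian k (Fin r)) : Fin m → FreeMetabelian k (Fin r) :=
  fun j => ev k r n p (fs j)

@[simp]
theorem subst_of_inl (fs : Fin m → FreeMetabelian k (Fin r ⊕ Fin n)) (i : Fin r) :
    subst fs (FreeMetabelian.of k _ (Sum.inl i)) = FreeMetabelian.of k _ (Sum.inl i) := by
  simp [subst]

@[simp]
theorem subst_of_inr (fs : Fin m → FreeMetabelian k (Fin r ⊕ Fin n)) (j : Fin m) :
    subst fs (FreeMetabelian.of k _ (Sum.inr j)) = fs j := by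
  simp [subst]

theorem subst_comp_incl (fs : Fin m → FreeMetabelian k (Fin r ⊕ Fin n)) :
    (subst fs).comp (incl k r m) = incl k r n :=
  FreeMetabelian.hom_ext fun i => by simp

theorem subst_comp_subst (fs : Fin m → FreeMetabelian k (Fin r ⊕ Fin n))
    (gs : Fin l → FreeMetabelian k (Fin r ⊕ Fin m)) :
    (subst fs).comp (subst gs) = subst (fun i => subst fs (gs i)) :=
  FreeMetabelian.hom_ext <| by rintro (i | i) <;> simp

theorem ev_comp_subst (p : Fin n → FreeMetabelian k (Fin r))
    (fs : Fin m → FreeMetabelian k (Fin r ⊕ Fin n)) :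
    (ev k r n p).comp (subst fs) = ev k r m (polyMap fs p) :=
  FreeMetabelian.hom_ext <| by rintro (i | j) <;> simp [polyMap]

theorem polyMap_polyMap (fs : Fin m → FreeMetabelian k (Fin r ⊕ Fin n))
    (gs : Fin l → FreeMetabelian k (Fin r ⊕ Fin m)) (p : Fin n → FreeMetabelian k (Fin r)) :
    polyMap gs (polyMap fs p) = polyMap (fun i => subst fs (gs i)) p :=
  funext fun i => (LieHom.congr_fun (ev_comp_subst p fs) (gs i)).symm

variable {Y : Set (Fin n → FreeMetabelian k (Fin r))} {Z : Set (Fin m → FreeMetabelian k (Fin r))}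

theorem mkHom_comp_subst_eq_mkHom_iff (fs : Fin n → FreeMetabelian k (Fin r ⊕ Fin n)) :
    (LieMeta.mkHom k (radIdeal k r n Y)).comp (subst fs) = LieMeta.mkHom k (radIdeal k r n Y) ↔
      ∀ p ∈ Y, polyMap fs p = p := by
  have hvar : ∀ j, LieMeta.mkHom k (radIdeal k r n Y) (fs j) =
      LieMeta.mkHom k _ (FreeMetabelian.of k _ (Sum.inr j)) ↔ ∀ p ∈ Y, polyMap fs p j = p j := by
    intro j
    simp only [LieMeta.mkHom_eq_mkHom_iff, mem_radIdeal, map_sub, ev_of_inr, sub_eq_zero, polyMap]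
  constructor
  · intro h p hp
    funext j
    exact (hvar j).1 (by simpa using LieHom.congr_fun h (FreeMetabelian.of k _ (Sum.inr j))) p hp
  · intro h
    refine FreeMetabelian.hom_ext ?_
    rintro (i | j)
    · simp
    · simpa using (hvar j).2 fun p hp => congrFun (h p hp) j

theorem mapsTo_polyMap_iff (hZ : IsAlgSet k r m Z) (fs : Fin m → FreeMetabelian k (Fin r ⊕ Fin n)) :
    Set.MapsTo (polyMap fs) Y Z ↔
      radIdeal k r m Z ≤ ((LieMeta.mkHom k (radIdeal k r n Y)).comp (subst fs)).ker := by
  simp only [SetLike.le_def, LieHom.mem_ker, LieHom.comp_apply, LieMeta.mkHom_eq_zero_iff,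
    mem_radIdeal, ← LieHom.comp_apply (ev k r n _), ev_comp_subst]
  constructor
  · exact fun h f hf p hp => hf _ (h hp)
  · intro h p hp
    rw [← vSet_radIdeal hZ]
    exact fun f hf => h (mem_radIdeal.1 hf) p hp

noncomputable def coordHom (fs : Fin m → FreeMetabelian k (Fin r ⊕ Fin n))
    (h : radIdeal k r m Z ≤ ((LieMeta.mkHom k (radIdeal k r n Y)).comp (subst fs)).ker) :
    Coord k r m Z →ₗ⁅k⁆ Coord k r n Y :=
  LieMeta.qlift _ _ h

theorem coordHom_kappa (fs : Fin m → FreeMetabelian k (Fin r ⊕ Fin n))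
    (h : radIdeal k r m Z ≤ ((LieMeta.mkHom k (radIdeal k r n Y)).comp (subst fs)).ker)
    (u : FreeMetabelian k (Fin r)) : coordHom fs h (kappa k r m Z u) = kappa k r n Y u :=
  congrArg (LieMeta.mkHom k _) (LieHom.congr_fun (subst_comp_incl fs) u)

theorem coordHom_coordHom (fs : Fin m → FreeMetabelian k (Fin r ⊕ Fin n))
    (gs : Fin n → FreeMetabelian k (Fin r ⊕ Fin m))
    (hf : radIdeal k r m Z ≤ ((LieMeta.mkHom k (radIdeal k r n Y)).comp (subst fs)).ker)
    (hg : radIdeal k r n Y ≤ ((LieMeta.mkHom k (radIdeal k r m Z)).comp (subst gs)).ker)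
    (hgf : ∀ p ∈ Y, polyMap gs (polyMap fs p) = p) (y : Coord k r n Y) :
    coordHom fs hf (coordHom gs hg y) = y := by
  obtain ⟨x, rfl⟩ := LieMeta.mkHom_surjective _ y
  simp only [polyMap_polyMap, ← mkHom_comp_subst_eq_mkHom_iff, ← subst_comp_subst] at hgf
  exact LieHom.congr_fun hgf x

theorem comp_mkHom_eq_mkHom_comp_subst (φ : Coord k r m Z →ₗ⁅k⁆ Coord k r n Y)
    (hφ : ∀ u, φ (kappa k r m Z u) = kappa k r n Y u)
    (fs : Fin m → FreeMetabelian k (Fin r ⊕ Fin n))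
    (hfs : ∀ j, LieMeta.mkHom k _ (fs j) =
      φ (LieMeta.mkHom k _ (FreeMetabelian.of k _ (Sum.inr j)))) :
    φ.comp (LieMeta.mkHom k (radIdeal k r m Z)) =
      (LieMeta.mkHom k (radIdeal k r n Y)).comp (subst fs) := by
  refine FreeMetabelian.hom_ext ?_
  rintro (i | j)
  · simpa [kappa] using hφ (FreeMetabelian.of k _ i)
  · simpa using (hfs j).symm

theorem mapsTo_polyMap_of_comp_mkHom_eq (hZ : IsAlgSet k r m Z)
    (φ : Coord k r m Z →ₗ⁅k⁆ Coord k r n Y) (fs : Fin m → FreeMetabelian k (Fin r ⊕ Fin n))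
    (hf : φ.comp (LieMeta.mkHom k _) = (LieMeta.mkHom k (radIdeal k r n Y)).comp (subst fs)) :
    Set.MapsTo (polyMap fs) Y Z := by
  refine (mapsTo_polyMap_iff hZ fs).2 fun x hx => ?_
  rw [← hf, LieHom.mem_ker, LieHom.comp_apply, (LieMeta.mkHom_eq_zero_iff _).2 hx, map_zero]

theorem polyMap_polyMap_of_comp_mkHom_eq (φ : Coord k r m Z →ₗ⁅k⁆ Coord k r n Y)
    (ψ : Coord k r n Y →ₗ⁅k⁆ Coord k r m Z) (hφψ : ∀ y, φ (ψ y) = y)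
    (fs : Fin m → FreeMetabelian k (Fin r ⊕ Fin n)) (gs : Fin n → FreeMetabelian k (Fin r ⊕ Fin m))
    (hf : φ.comp (LieMeta.mkHom k _) = (LieMeta.mkHom k (radIdeal k r n Y)).comp (subst fs))
    (hg : ψ.comp (LieMeta.mkHom k _) = (LieMeta.mkHom k (radIdeal k r m Z)).comp (subst gs))
    (p : Fin n → FreeMetabelian k (Fin r)) (hp : p ∈ Y) :
    polyMap gs (polyMap fs p) = p := by
  rw [polyMap_polyMap]
  refine (mkHom_comp_subst_eq_mkHom_iff _).1 ?_ p hp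
  refine LieHom.ext fun x => ?_
  have hfx := LieHom.congr_fun hf (subst gs x)
  have hgx := LieHom.congr_fun hg x
  simp only [LieHom.comp_apply] at hfx hgx
  rw [← subst_comp_subst, LieHom.comp_apply, LieHom.comp_apply, ← hfx, ← hgx, hφψ]

end LieAG

end CoordinateAlgebras

theorem algIso_iff_coord_iso_general
    (k : Type u) [Field k] (r : ℕ) (n m : ℕ)
    (Y : Set (Fin n → FreeMetabelian k (Fin r)))
    (Z : Set (Fin m → FreeMetabelian k (Fin r)))
    (hY : LieAG.IsAlgSet k r n Y) (hZ : LieAG.IsAlgSet k r m Z) :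
    LieAG.AlgIso k r Y Z ↔
      ∃ e : LieAG.Coord k r n Y ≃ₗ⁅k⁆ LieAG.Coord k r m Z,
        ∀ u : FreeMetabelian k (Fin r),
          e (LieAG.kappa k r n Y u) = LieAG.kappa k r m Z u := by
  open LieAG in
  constructor
  · rintro ⟨fs, gs, hfs, hgs, hgf, hfg⟩
    have hf := (mapsTo_polyMap_iff hZ fs).1 fun p hp => hfs p hp
    have hg := (mapsTo_polyMap_iff hY gs).1 fun q hq => hgs q hq
    exact ⟨{ coordHom gs hg with
        invFun := coordHom fs hf
        left_inv := coordHom_coordHom fs gs hf hg hgf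
        right_inv := coordHom_coordHom gs fs hg hf hfg }, coordHom_kappa gs hg⟩
  · rintro ⟨e, he⟩
    have he' : ∀ u, e.symm (kappa k r m Z u) = kappa k r n Y u := fun u => by
      rw [← he, e.symm_apply_apply]
    choose fs hfs using fun j => LieMeta.mkHom_surjective _
      (e.symm (LieMeta.mkHom k (radIdeal k r m Z) (FreeMetabelian.of k _ (Sum.inr j))))
    choose gs hgs using fun i => LieMeta.mkHom_surjective _
      (e (LieMeta.mkHom k (radIdeal k r n Y) (FreeMetabelian.of k _ (Sum.inr i))))
    have hf := comp_mkHom_eq_mkHom_comp_subst e.symm.toLieHom he' fs hfs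
    have hg := comp_mkHom_eq_mkHom_comp_subst e.toLieHom he gs hgs
    exact ⟨fs, gs, mapsTo_polyMap_of_comp_mkHom_eq hZ _ fs hf,
      mapsTo_polyMap_of_comp_mkHom_eq hY _ gs hg,
      polyMap_polyMap_of_comp_mkHom_eq _ _ e.symm_apply_apply fs gs hf hg,
      polyMap_polyMap_of_comp_mkHom_eq _ _ e.apply_symm_apply gs fs hg hf⟩

/-- Two nonempty algebraic sets over `F_r` are isomorphic as algebraic sets
if and only if their coordinate algebras are `F_r`-isomorphic. -/
theorem algIso_iff_coord_iso
    (k : Type u) [Field k] (r : ℕ) (hr : 2 ≤ r) (n m : ℕ)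
    (Y : Set (Fin n → FreeMetabelian k (Fin r)))
    (Z : Set (Fin m → FreeMetabelian k (Fin r)))
    (hY : LieAG.IsAlgSet k r n Y) (hZ : LieAG.IsAlgSet k r m Z)
    (hYne : Y.Nonempty) (hZne : Z.Nonempty) :
    LieAG.AlgIso k r Y Z ↔
      ∃ e : LieAG.Coord k r n Y ≃ₗ⁅k⁆ LieAG.Coord k r m Z,
        ∀ u : FreeMetabelian k (Fin r),
          e (LieAG.kappa k r n Y u) = LieAG.kappa k r m Z u :=
  algIso_iff_coord_iso_general k r n m Y Z hY hZ
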